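/- arXiv:2210.11627 — 3 statements merged into one kernel-verified Lean document; each statement's English description precedes it below -/
import Mathlib

section
/- Let f be an efficient, tops-only, onto rule on the universal domain. Then f is NOM if and only if either (i) there is at most one agent i with V_i ≠ ∅, and for that agent SV_i = V_i, or (ii) there is an alternative y such that for every agent i, SV_i = V_i ⊆ {y}. -/
/-- A preference profile: each agent `i : Fin n` has a strict preference,
modeled as a linear order on the set of alternatives `X`. -/
abbrev Profile (n : ℕ) (X : Type*) := Fin n → LinearOrder X

/-- The top (best) alternative of a preference `L`. -/
noncomputable def top {X : Type*} [Fintype X] [Nonempty X] (L : LinearOrder X) : X :=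
  @Finset.max' X L Finset.univ Finset.univ_nonempty

/-- `x` is strictly preferred to `y` according to `L`. -/
def prefers {X : Type*} (L : LinearOrder X) (x y : X) : Prop := L.lt y x

/-- The option set left open by preference `L` of agent `i` at rule `f`. -/
def OptionSet {n : ℕ} {X : Type*} (f : Profile n X → X) (i : Fin n) (L : LinearOrder X) :
    Set X :=
  {x | ∃ P : Profile n X, P i = L ∧ f P = x}

/-- `Li'` is a profitable manipulation of `f` at (true preference) `Li` for agent `i`. -/
def IsManip {n : ℕ} {X : Type*} (f : Profile n X → X) (i : Fin n)
    (Li Li' : LinearOrder X) : Prop :=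
  ∃ P : Profile n X, P i = Li ∧ prefers Li (f (Function.update P i Li')) (f P)

/-- The worst element of `O(Li')` is strictly `Li`-preferred to the worst element of `O(Li)`.
For nonempty finite option sets this is equivalent to: some element of `O(Li)` is strictly
worse (w.r.t. `Li`) than every element of `O(Li')`. -/
def WorstImproves {n : ℕ} {X : Type*} (f : Profile n X → X) (i : Fin n)
    (Li Li' : LinearOrder X) : Prop :=
  ∃ w ∈ OptionSet f i Li, ∀ w' ∈ OptionSet f i Li', prefers Li w' w

/-- The best element of `O(Li')` is strictly `Li`-preferred to the best element of `O(Li)`.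
For nonempty finite option sets this is equivalent to: some element of `O(Li')` is strictly
better (w.r.t. `Li`) than every element of `O(Li)`. -/
def BestImproves {n : ℕ} {X : Type*} (f : Profile n X → X) (i : Fin n)
    (Li Li' : LinearOrder X) : Prop :=
  ∃ b' ∈ OptionSet f i Li', ∀ b ∈ OptionSet f i Li, prefers Li b' b

/-- `Li'` is an obvious manipulation of `f` at `Li` for agent `i`. -/
def IsObviousManip {n : ℕ} {X : Type*} (f : Profile n X → X) (i : Fin n)
    (Li Li' : LinearOrder X) : Prop :=
  IsManip f i Li Li' ∧ (WorstImproves f i Li Li' ∨ BestImproves f i Li Li')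

/-- `f` is not obviously manipulable. -/
def NOM {n : ℕ} {X : Type*} (f : Profile n X → X) : Prop :=
  ∀ (i : Fin n) (Li Li' : LinearOrder X), ¬ IsObviousManip f i Li Li'

/-- `f` is tops-only. -/
def TopsOnly {n : ℕ} {X : Type*} [Fintype X] [Nonempty X] (f : Profile n X → X) : Prop :=
  ∀ P P' : Profile n X, (∀ i, top (P i) = top (P' i)) → f P = f P'

/-- The set `V_i` of alternatives that agent `i` vetoes via some preference. -/
def VetoSet {n : ℕ} {X : Type*} (f : Profile n X → X) (i : Fin n) : Set X :=
  {x | ∃ L : LinearOrder X, x ∉ OptionSet f i L}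

/-- The set `SV_i` of alternatives strongly vetoed by agent `i`:
`x` is vetoed via `L` precisely when the top of `L` differs from `x`. -/
def StrongVetoSet {n : ℕ} {X : Type*} [Fintype X] [Nonempty X]
    (f : Profile n X → X) (i : Fin n) : Set X :=
  {x | ∀ L : LinearOrder X, x ∉ OptionSet f i L ↔ top L ≠ x}

/-- `f` is dictatorial: some agent's top alternative is always selected. -/
def Dictatorial {n : ℕ} {X : Type*} [Fintype X] [Nonempty X]
    (f : Profile n X → X) : Prop :=
  ∃ i : Fin n, ∀ P : Profile n X, f P = top (P i)

/-- `f` is efficient: it never selects a Pareto-dominated alternative. -/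
def Efficient {n : ℕ} {X : Type*} (f : Profile n X → X) : Prop :=
  ∀ P : Profile n X, ¬ ∃ x : X, ∀ i, prefers (P i) x (f P)

/-!
Efficiency puts the top of every report in its option set, so no report can improve the best
possible outcome, and NOM amounts to the absence of worst-case improvements. A weak veto of `x`
(some report with top `≠ x` keeps `x` available) yields one: by tops-only, that report may be taken
with `x` at the bottom, and a report vetoing `x` then makes every possible outcome better than `x`.
Conversely, if all vetoes are strong, a worst-case improvement at `Li` could only start from
`top Li`, which nothing beats. Finally, if agents `i ≠ j` strongly veto `x ≠ z`, let `i` report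
`z ≻ x ≻ ⋯` and everybody else a preference with top `x`: the outcome is neither `x` nor `z`,
so it is Pareto-dominated by `x`.
-/

section Preferences

variable {X : Type*}

lemma not_prefers_self (L : LinearOrder X) (x : X) : ¬ prefers L x x :=
  @lt_irrefl X L.toPreorder x

variable [Fintype X] [Nonempty X]

lemma not_prefers_top (L : LinearOrder X) (x : X) : ¬ prefers L x (top L) :=
  @not_lt_of_ge X L.toPreorder _ _ (@Finset.le_max' X L Finset.univ x (Finset.mem_univ x))

lemma prefers_top_of_ne (L : LinearOrder X) {x : X} (h : x ≠ top L) : prefers L (top L) x :=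
  @lt_of_le_of_ne X L.toPartialOrder _ _ (@Finset.le_max' X L Finset.univ x (Finset.mem_univ x)) h

lemma top_eq_of_forall_prefers (L : LinearOrder X) {t : X} (h : ∀ x, x ≠ t → prefers L t x) :
    top L = t :=
  not_not.1 fun hne => not_prefers_top L t (h _ hne)

lemma exists_linearOrder_of_rank (g : X → ℕ) {t : X} (ht : ∀ x, x ≠ t → g x < g t) :
    ∃ L : LinearOrder X, top L = t ∧ ∀ a b, g a < g b → prefers L b a := by
  let e : X → ℕ ×ₗ Fin (Fintype.card X) := fun x => toLex (g x, Fintype.equivFin X x)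
  have he : e.Injective := fun a b hab =>
    (Fintype.equivFin X).injective (congrArg Prod.snd (toLex.injective hab))
  let L := LinearOrder.lift' e he
  have hL : ∀ a b, g a < g b → prefers L b a := fun a b hab => Prod.Lex.lt_iff.2 (Or.inl hab)
  exact ⟨L, top_eq_of_forall_prefers L fun x hx => hL x t (ht x hx), hL⟩

lemma exists_linearOrder_top (t : X) : ∃ L : LinearOrder X, top L = t := by
  classical
  obtain ⟨L, hL, -⟩ := exists_linearOrder_of_rank (fun x => if x = t then 1 else 0) (t := t)
    fun x hx => by simp [hx]
  exact ⟨L, hL⟩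

lemma exists_linearOrder_top_bot {t x : X} (h : t ≠ x) :
    ∃ L : LinearOrder X, top L = t ∧ ∀ z, z ≠ x → prefers L z x := by
  classical
  obtain ⟨L, hL, hg⟩ := exists_linearOrder_of_rank
    (fun z => if z = t then 2 else if z = x then 0 else 1) (t := t)
    fun z hz => by split_ifs <;> simp_all
  refine ⟨L, hL, fun z hz => hg x z ?_⟩
  split_ifs <;> simp_all

lemma exists_linearOrder_top_second {t s : X} (h : t ≠ s) :
    ∃ L : LinearOrder X, top L = t ∧ ∀ z, z ≠ t → z ≠ s → prefers L s z := by
  classical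
  obtain ⟨L, hL, hg⟩ := exists_linearOrder_of_rank
    (fun z => if z = t then 2 else if z = s then 1 else 0) (t := t)
    fun z hz => by split_ifs <;> simp_all
  refine ⟨L, hL, fun z hzt hzs => hg z s ?_⟩
  split_ifs <;> simp_all

end Preferences

section Rules

variable {n : ℕ} {X : Type*} {f : Profile n X → X} {i : Fin n}

lemma apply_mem_optionSet (f : Profile n X → X) (P : Profile n X) (i : Fin n) :
    f P ∈ OptionSet f i (P i) :=
  ⟨P, rfl, rfl⟩

lemma WorstImproves.isManip {Li Li' : LinearOrder X} (h : WorstImproves f i Li Li') :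
    IsManip f i Li Li' := by
  obtain ⟨_, ⟨P, hPi, rfl⟩, hw⟩ := h
  exact ⟨P, hPi, hw _ ⟨_, Function.update_self .., rfl⟩⟩

lemma NOM.not_worstImproves (hN : NOM f) (i : Fin n) (Li Li' : LinearOrder X) :
    ¬ WorstImproves f i Li Li' := fun h =>
  hN i Li Li' ⟨h.isManip, Or.inl h⟩

variable [Fintype X] [Nonempty X]

lemma TopsOnly.optionSet_subset (htops : TopsOnly f) (i : Fin n) {L L' : LinearOrder X}
    (h : top L = top L') : OptionSet f i L ⊆ OptionSet f i L' := by
  rintro _ ⟨P, rfl, rfl⟩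
  refine ⟨Function.update P i L', Function.update_self .., htops _ _ fun j => ?_⟩
  rcases eq_or_ne j i with rfl | hj
  · rw [Function.update_self, h]
  · rw [Function.update_of_ne hj]

lemma Efficient.top_mem_optionSet (heff : Efficient f) (i : Fin n) (L : LinearOrder X) :
    top L ∈ OptionSet f i L :=
  ⟨fun _ => L, rfl, not_not.1 fun hne => heff _ ⟨top L, fun _ => prefers_top_of_ne L hne⟩⟩

lemma Efficient.nontrivial_of_mem_vetoSet (heff : Efficient f) {x : X} (hx : x ∈ VetoSet f i) :
    Nontrivial X := by
  obtain ⟨L, hL⟩ := hx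
  exact ⟨⟨top L, x, fun h => hL (h ▸ heff.top_mem_optionSet i L)⟩⟩

lemma Efficient.not_bestImproves (heff : Efficient f) (i : Fin n) (Li Li' : LinearOrder X) :
    ¬ BestImproves f i Li Li' := fun ⟨b, _, hb⟩ =>
  not_prefers_top Li b (hb _ (heff.top_mem_optionSet i Li))

lemma strongVetoSet_subset_vetoSet [Nontrivial X] (f : Profile n X → X) (i : Fin n) :
    StrongVetoSet f i ⊆ VetoSet f i := fun x hx => by
  obtain ⟨t, ht⟩ := exists_ne x
  obtain ⟨L, rfl⟩ := exists_linearOrder_top t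
  exact ⟨L, (hx L).2 ht⟩

lemma Efficient.nom_of_vetoSet_subset (heff : Efficient f)
    (h : ∀ i, VetoSet f i ⊆ StrongVetoSet f i) : NOM f := by
  rintro i Li Li' ⟨-, ⟨w, hw, hall⟩ | hB⟩
  · by_cases hv : w ∈ VetoSet f i
    · -- a strongly vetoed `w` is only available at `Li` if it is `top Li`
      have htop : top Li = w := not_not.1 fun hne => (h i hv Li).2 hne hw
      exact not_prefers_top Li _ (htop ▸ hall _ (heff.top_mem_optionSet i Li'))
    · exact not_prefers_self Li w (hall w (not_not.1 fun hno => hv ⟨Li', hno⟩))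
  · exact heff.not_bestImproves i Li Li' hB

lemma NOM.vetoSet_subset_strongVetoSet (hN : NOM f) (htops : TopsOnly f) (heff : Efficient f)
    (i : Fin n) : VetoSet f i ⊆ StrongVetoSet f i := by
  rintro x ⟨L₀, hL₀⟩ L
  refine ⟨fun hx hL => hx (hL ▸ heff.top_mem_optionSet i L), fun hL hx => ?_⟩
  obtain ⟨Li, hLi, hbot⟩ := exists_linearOrder_top_bot hL
  refine hN.not_worstImproves i Li L₀ ⟨x, htops.optionSet_subset i hLi.symm hx, fun w hw => ?_⟩
  exact hbot w fun hwx => hL₀ (hwx ▸ hw)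

lemma NOM.strongVetoSet_eq_vetoSet [Nontrivial X] (hN : NOM f) (htops : TopsOnly f)
    (heff : Efficient f) (i : Fin n) : StrongVetoSet f i = VetoSet f i :=
  (strongVetoSet_subset_vetoSet f i).antisymm (hN.vetoSet_subset_strongVetoSet htops heff i)

lemma NOM.eq_of_mem_vetoSet (hN : NOM f) (htops : TopsOnly f) (heff : Efficient f)
    {i j : Fin n} (hij : i ≠ j) {x z : X} (hx : x ∈ VetoSet f i) (hz : z ∈ VetoSet f j) :
    x = z := by
  by_contra hxz
  have hxi := hN.vetoSet_subset_strongVetoSet htops heff i hx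
  have hzj := hN.vetoSet_subset_strongVetoSet htops heff j hz
  obtain ⟨Lzx, hLzx, hsecond⟩ := exists_linearOrder_top_second (Ne.symm hxz)
  obtain ⟨Lx, hLx⟩ := exists_linearOrder_top x
  let P : Profile n X := Function.update (fun _ => Lx) i Lzx
  have hPi : P i = Lzx := Function.update_self ..
  have hP : ∀ k, k ≠ i → P k = Lx := fun k hk => Function.update_of_ne hk ..
  have hfx : f P ≠ x := fun he =>
    (hxi Lzx).2 (hLzx ▸ Ne.symm hxz) (he ▸ hPi ▸ apply_mem_optionSet f P i)
  have hfz : f P ≠ z := fun he =>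
    (hzj Lx).2 (hLx ▸ hxz) (he ▸ hP j hij.symm ▸ apply_mem_optionSet f P j)
  refine heff P ⟨x, fun k => ?_⟩
  rcases eq_or_ne k i with rfl | hk
  · rw [hPi]
    exact hsecond _ hfz hfx
  · rw [hP k hk, ← hLx]
    exact prefers_top_of_ne Lx (hLx ▸ hfx)

end Rules

theorem efficient_NOM_characterization_general {n : ℕ} {X : Type*} [Fintype X] [Nonempty X]
    (f : Profile n X → X) (htops : TopsOnly f)
    (heff : Efficient f) :
    NOM f ↔
      ((∀ i j : Fin n, (VetoSet f i).Nonempty → (VetoSet f j).Nonempty → i = j) ∧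
        ∀ i : Fin n, (VetoSet f i).Nonempty → StrongVetoSet f i = VetoSet f i) ∨
      (∃ y : X, ∀ i : Fin n,
        StrongVetoSet f i = VetoSet f i ∧ VetoSet f i ⊆ {y}) := by
  constructor
  · intro hN
    by_cases hunique : ∀ i j : Fin n, (VetoSet f i).Nonempty → (VetoSet f j).Nonempty → i = j
    · refine Or.inl ⟨hunique, fun i ⟨x, hx⟩ => ?_⟩
      have := heff.nontrivial_of_mem_vetoSet hx
      exact hN.strongVetoSet_eq_vetoSet htops heff i
    · push Not at hunique
      obtain ⟨i, j, ⟨x, hx⟩, ⟨z, hz⟩, hij⟩ := hunique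
      have := heff.nontrivial_of_mem_vetoSet hx
      refine Or.inr ⟨x, fun k => ⟨hN.strongVetoSet_eq_vetoSet htops heff k, fun w hw => ?_⟩⟩
      rcases eq_or_ne k i with rfl | hki
      · exact (hN.eq_of_mem_vetoSet htops heff hij hw hz).trans
          (hN.eq_of_mem_vetoSet htops heff hij hx hz).symm
      · exact hN.eq_of_mem_vetoSet htops heff hki hw hx
  · rintro (⟨-, hSV⟩ | ⟨y, hSV⟩)
    · exact heff.nom_of_vetoSet_subset fun i x hx => (hSV i ⟨x, hx⟩).ge hx
    · exact heff.nom_of_vetoSet_subset fun i => (hSV i).1.ge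

/-- An efficient, onto, tops-only rule is NOM iff either (i) at most one agent has a
nonempty veto set and that agent's vetoes are all strong, or (ii) there is an
alternative `y` such that `SV_i = V_i ⊆ {y}` for every agent. -/
theorem efficient_NOM_characterization {n : ℕ} {X : Type*} [Fintype X] [Nonempty X]
    (hn : 2 ≤ n) (hX : 2 ≤ Fintype.card X)
    (f : Profile n X → X) (honto : Function.Surjective f) (htops : TopsOnly f)
    (heff : Efficient f) :
    NOM f ↔
      ((∀ i j : Fin n, (VetoSet f i).Nonempty → (VetoSet f j).Nonempty → i = j) ∧
        ∀ i : Fin n, (VetoSet f i).Nonempty → StrongVetoSet f i = VetoSet f i) ∨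
      (∃ y : X, ∀ i : Fin n,
        StrongVetoSet f i = VetoSet f i ∧ VetoSet f i ⊆ {y}) :=
  efficient_NOM_characterization_general f htops heff
end

section
/- For a median voter scheme f^α on X = {a,...,b} and any agent i: an alternative x with x < α_1 is strongly vetoed by i if and only if x = a; and an alternative x with x > α_{n-1} is strongly vetoed by i if and only if x = b. -/
/-- The ordered set of alternatives `X = {a, a+1, ..., b} ⊆ ℕ`. -/
abbrev Alt (a b : ℕ) : Type := {x : ℕ // x ∈ Finset.Icc a b}

/-- The median of a multiset (w.r.t. the canonical linear order), with default `d`;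
for a multiset of odd cardinality `2n-1` this is the usual median. -/
def medianOf {Y : Type*} [LinearOrder Y] (d : Y) (s : Multiset Y) : Y :=
  (s.sort (· ≤ ·)).getD (s.card / 2) d

/-- The median voter scheme with fixed ballots `α_1, ..., α_{n-1}`: it selects the median
of the `n` tops and the `n-1` fixed ballots. -/
noncomputable def medianScheme {n a b : ℕ} [Nonempty (Alt a b)]
    (α : Fin (n - 1) → Alt a b) (P : Profile n (Alt a b)) : Alt a b :=
  medianOf (Classical.arbitrary (Alt a b))
    (Multiset.map (fun i => top (P i)) Finset.univ.val +
      Multiset.map α Finset.univ.val)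


section MedianHelpers

open List Multiset

private lemma getD_le_of_countP {Y : Type*} [LinearOrder Y] {l : List Y} (hs : l.Pairwise (· ≤ ·))
    {k : ℕ} (hk : k < l.length) {x : Y} (d : Y)
    (hc : k + 1 ≤ l.countP (fun y => decide (y ≤ x))) : l.getD k d ≤ x := by
  by_contra h
  push_neg at h
  rw [List.getD_eq_getElem l d hk] at h
  have hdrop : (l.drop k).countP (fun y => decide (y ≤ x)) = 0 := by
    rw [List.countP_eq_zero]
    intro y hy
    simp only [decide_eq_true_eq, not_le]
    refine lt_of_lt_of_le h ?_
    rw [List.drop_eq_getElem_cons hk] at hy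
    rcases List.mem_cons.1 hy with rfl | hy
    · exact le_refl _
    · have hsd : (l.drop k).Pairwise (· ≤ ·) := hs.drop
      rw [List.drop_eq_getElem_cons hk] at hsd
      exact List.rel_of_pairwise_cons hsd hy
  have hcount : l.countP (fun y => decide (y ≤ x)) =
      (l.take k).countP (fun y => decide (y ≤ x)) + (l.drop k).countP (fun y => decide (y ≤ x)) := by
    conv_lhs => rw [← List.take_append_drop k l]
    exact List.countP_append
  have h1 : (l.take k).countP (fun y => decide (y ≤ x)) ≤ k := by
    calc _ ≤ (l.take k).length := List.countP_le_length
    _ ≤ k := by simp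
  omega

private lemma le_getD_of_countP {Y : Type*} [LinearOrder Y] {l : List Y} (hs : l.Pairwise (· ≤ ·))
    {k : ℕ} (hk : k < l.length) {x : Y} (d : Y)
    (hc : l.length - k ≤ l.countP (fun y => decide (x ≤ y))) : x ≤ l.getD k d := by
  by_contra h
  push_neg at h
  rw [List.getD_eq_getElem l d hk] at h
  have htake : (l.take (k+1)).countP (fun y => decide (x ≤ y)) = 0 := by
    rw [List.countP_eq_zero]
    intro y hy
    simp only [decide_eq_true_eq, not_le]
    refine lt_of_le_of_lt ?_ h
    obtain ⟨j, hj, rfl⟩ := List.getElem_of_mem hy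
    rw [List.getElem_take]
    have hjl : j < l.length := by rw [List.length_take] at hj; omega
    have hjk : j ≤ k := by rw [List.length_take] at hj; omega
    exact hs.rel_get_of_le (a := ⟨j, hjl⟩) (b := ⟨k, hk⟩) hjk
  have hcount : l.countP (fun y => decide (x ≤ y)) =
      (l.take (k+1)).countP (fun y => decide (x ≤ y)) + (l.drop (k+1)).countP (fun y => decide (x ≤ y)) := by
    conv_lhs => rw [← List.take_append_drop (k+1) l]
    exact List.countP_append
  have h1 : (l.drop (k+1)).countP (fun y => decide (x ≤ y)) ≤ l.length - (k+1) := by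
    calc _ ≤ (l.drop (k+1)).length := List.countP_le_length
    _ ≤ l.length - (k+1) := by simp
  omega

private lemma countP_of_getD_le {Y : Type*} [LinearOrder Y] {l : List Y} (hs : l.Pairwise (· ≤ ·))
    {k : ℕ} (hk : k < l.length) {x : Y} (d : Y)
    (h : l.getD k d ≤ x) : k + 1 ≤ l.countP (fun y => decide (y ≤ x)) := by
  rw [List.getD_eq_getElem l d hk] at h
  have htake : (l.take (k+1)).countP (fun y => decide (y ≤ x)) = (l.take (k+1)).length := by
    rw [List.countP_eq_length]
    intro y hy
    simp only [decide_eq_true_eq]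
    refine le_trans ?_ h
    obtain ⟨j, hj, rfl⟩ := List.getElem_of_mem hy
    rw [List.getElem_take]
    have hjl : j < l.length := by rw [List.length_take] at hj; omega
    have hjk : j ≤ k := by rw [List.length_take] at hj; omega
    exact hs.rel_get_of_le (a := ⟨j, hjl⟩) (b := ⟨k, hk⟩) hjk
  have hlen : (l.take (k+1)).length = k + 1 := by simp; omega
  have hcount : l.countP (fun y => decide (y ≤ x)) =
      (l.take (k+1)).countP (fun y => decide (y ≤ x)) + (l.drop (k+1)).countP (fun y => decide (y ≤ x)) := by
    conv_lhs => rw [← List.take_append_drop (k+1) l]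
    exact List.countP_append
  omega

private lemma countP_of_le_getD {Y : Type*} [LinearOrder Y] {l : List Y} (hs : l.Pairwise (· ≤ ·))
    {k : ℕ} (hk : k < l.length) {x : Y} (d : Y)
    (h : x ≤ l.getD k d) : l.length - k ≤ l.countP (fun y => decide (x ≤ y)) := by
  rw [List.getD_eq_getElem l d hk] at h
  have hdrop : (l.drop k).countP (fun y => decide (x ≤ y)) = (l.drop k).length := by
    rw [List.countP_eq_length]
    intro y hy
    simp only [decide_eq_true_eq]
    refine le_trans h ?_
    rw [List.drop_eq_getElem_cons hk] at hy
    rcases List.mem_cons.1 hy with rfl | hy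
    · exact le_refl _
    · have hsd : (l.drop k).Pairwise (· ≤ ·) := hs.drop
      rw [List.drop_eq_getElem_cons hk] at hsd
      exact List.rel_of_pairwise_cons hsd hy
  have hlen : (l.drop k).length = l.length - k := by simp
  have hcount : l.countP (fun y => decide (x ≤ y)) =
      (l.take k).countP (fun y => decide (x ≤ y)) + (l.drop k).countP (fun y => decide (x ≤ y)) := by
    conv_lhs => rw [← List.take_append_drop k l]
    exact List.countP_append
  omega

private lemma countP_sort {Y : Type*} [LinearOrder Y] (s : Multiset Y) (p : Y → Prop)
    [DecidablePred p] :
    (s.sort (· ≤ ·)).countP (fun y => decide (p y)) = s.countP p := by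
  conv_rhs => rw [← Multiset.sort_eq s (· ≤ ·)]
  rw [Multiset.coe_countP]

private lemma medianOf_eq {Y : Type*} [LinearOrder Y] (d : Y) {s : Multiset Y} {x : Y}
    (h1 : Multiset.card s / 2 + 1 ≤ s.countP (fun y => y ≤ x))
    (h2 : Multiset.card s - Multiset.card s / 2 ≤ s.countP (fun y => x ≤ y)) :
    medianOf d s = x := by
  have hcard : 0 < Multiset.card s := by
    have := Multiset.countP_le_card (fun y => y ≤ x) s; omega
  have hk : Multiset.card s / 2 < (s.sort (· ≤ ·)).length := by
    rw [Multiset.length_sort]; omega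
  have hsorted := Multiset.pairwise_sort s (· ≤ ·)
  refine le_antisymm ?_ ?_
  · exact getD_le_of_countP hsorted hk d (by rw [countP_sort s (fun y => y ≤ x)]; exact h1)
  · refine le_getD_of_countP hsorted hk d ?_
    rw [countP_sort s (fun y => x ≤ y), Multiset.length_sort]; exact h2

private lemma lt_medianOf {Y : Type*} [LinearOrder Y] (d : Y) {s : Multiset Y} {x : Y}
    (hcard : 0 < Multiset.card s)
    (h : s.countP (fun y => y ≤ x) ≤ Multiset.card s / 2) :
    x < medianOf d s := by
  by_contra hcon
  push_neg at hcon
  have hk : Multiset.card s / 2 < (s.sort (· ≤ ·)).length := by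
    rw [Multiset.length_sort]; omega
  have := countP_of_getD_le (Multiset.pairwise_sort s (· ≤ ·)) hk d hcon
  rw [countP_sort s (fun y => y ≤ x)] at this
  omega

private lemma medianOf_lt {Y : Type*} [LinearOrder Y] (d : Y) {s : Multiset Y} {x : Y}
    (hcard : 0 < Multiset.card s)
    (h : s.countP (fun y => x ≤ y) ≤ Multiset.card s - Multiset.card s / 2 - 1) :
    medianOf d s < x := by
  by_contra hcon
  push_neg at hcon
  have hk : Multiset.card s / 2 < (s.sort (· ≤ ·)).length := by
    rw [Multiset.length_sort]; omega
  have := countP_of_le_getD (Multiset.pairwise_sort s (· ≤ ·)) hk d hcon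
  rw [countP_sort s (fun y => x ≤ y), Multiset.length_sort] at this
  have h2 : Multiset.card s / 2 < Multiset.card s - Multiset.card s / 2 := by omega
  omega

/-- A linear order on `Y` whose maximum is `t`. -/
noncomputable def topOrder {Y : Type*} [LinearOrder Y] (t : Y) : LinearOrder Y :=
  LinearOrder.lift' (fun y => toLex ((decide (y = t) : Bool), y))
    (fun y z h => by
      have := congrArg (fun p => (ofLex p).2) h
      simpa using this)

private lemma topOrder_le {Y : Type*} [LinearOrder Y] (t : Y) (y : Y) : (topOrder t).le y t := by
  show toLex ((decide (y = t) : Bool), y) ≤ toLex ((decide (t = t) : Bool), t)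
  rw [Prod.Lex.le_iff]
  by_cases h : y = t
  · subst h; right; simp
  · left; simp [h]

private lemma top_topOrder {Y : Type*} [LinearOrder Y] [Fintype Y] [Nonempty Y] (t : Y) :
    top (topOrder t) = t := by
  refine @le_antisymm Y (topOrder t).toPartialOrder _ _ ?_ ?_
  · exact @Finset.max'_le Y (topOrder t) _ _ _ (fun y _ => topOrder_le t y)
  · exact @Finset.le_max' Y (topOrder t) _ t (Finset.mem_univ t)

private lemma countP_map_univ_of_forall {n : ℕ} {Y : Type*} (f : Fin n → Y) (p : Y → Prop)
    [DecidablePred p] (h : ∀ j, p (f j)) :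
    Multiset.countP p (Multiset.map f Finset.univ.val) = n := by
  have heq : Multiset.countP p (Multiset.map f Finset.univ.val)
      = Multiset.card (Multiset.map f Finset.univ.val) :=
    Multiset.countP_eq_card.2 (by
      intro y hy; obtain ⟨j, _, rfl⟩ := Multiset.mem_map.1 hy; exact h j)
  rw [heq]; simp

private lemma countP_map_univ_of_forall_not {n : ℕ} {Y : Type*} (f : Fin n → Y) (p : Y → Prop)
    [DecidablePred p] (h : ∀ j, ¬ p (f j)) :
    Multiset.countP p (Multiset.map f Finset.univ.val) = 0 := by
  exact Multiset.countP_eq_zero.2 (by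
    intro y hy; obtain ⟨j, _, rfl⟩ := Multiset.mem_map.1 hy; exact h j)

private lemma countP_map_univ_split {n : ℕ} {Y : Type*} (f : Fin n → Y) (p : Y → Prop)
    [DecidablePred p] (i : Fin n) :
    Multiset.countP p (Multiset.map f Finset.univ.val) =
      Multiset.countP p (Multiset.map f (Finset.univ.val.erase i)) + (if p (f i) then 1 else 0) := by
  conv_lhs => rw [← Multiset.cons_erase (show i ∈ (Finset.univ : Finset (Fin n)).val from Finset.mem_univ i),
    Multiset.map_cons, Multiset.countP_cons]

private lemma card_erase_univ {n : ℕ} (i : Fin n) :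
    Multiset.card (Finset.univ.val.erase i) = n - 1 := by
  rw [Multiset.card_erase_of_mem (show i ∈ (Finset.univ : Finset (Fin n)).val from Finset.mem_univ i)]
  simp

private lemma countP_map_univ_le {n : ℕ} {Y : Type*} (f : Fin n → Y) (p : Y → Prop)
    [DecidablePred p] (i : Fin n) (h : ¬ p (f i)) :
    Multiset.countP p (Multiset.map f Finset.univ.val) ≤ n - 1 := by
  rw [countP_map_univ_split f p i, if_neg h]
  have h1 : Multiset.countP p (Multiset.map f (Finset.univ.val.erase i)) ≤ n - 1 := by
    have := Multiset.countP_le_card p (Multiset.map f (Finset.univ.val.erase i))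
    rwa [Multiset.card_map, card_erase_univ] at this
  omega

private lemma countP_map_univ_ge {n : ℕ} {Y : Type*} (f : Fin n → Y) (p : Y → Prop)
    [DecidablePred p] (i : Fin n) (h : ∀ j, j ≠ i → p (f j)) :
    n - 1 ≤ Multiset.countP p (Multiset.map f Finset.univ.val) := by
  rw [countP_map_univ_split f p i]
  have heq : Multiset.countP p (Multiset.map f (Finset.univ.val.erase i))
      = Multiset.card (Multiset.map f (Finset.univ.val.erase i)) :=
    Multiset.countP_eq_card.2 (by
      intro y hy
      obtain ⟨j, hj, rfl⟩ := Multiset.mem_map.1 hy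
      have hji : j ≠ i := ((Finset.univ.nodup).mem_erase_iff.1 hj).1
      exact h j hji)
  have hcard : Multiset.card (Multiset.map f (Finset.univ.val.erase i)) = n - 1 := by
    rw [Multiset.card_map, card_erase_univ]
  omega

private lemma scheme_card {n : ℕ} {a b : ℕ} [Nonempty (Alt a b)]
    (α : Fin (n - 1) → Alt a b) (P : Profile n (Alt a b)) (hn : 2 ≤ n) :
    Multiset.card (Multiset.map (fun i => top (P i)) Finset.univ.val +
      Multiset.map α Finset.univ.val) = 2 * n - 1 := by
  rw [Multiset.card_add, Multiset.card_map, Multiset.card_map]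
  simp only [Finset.card_val, Finset.card_univ, Fintype.card_fin]
  omega

private lemma medianScheme_eq_of_counts {n : ℕ} {a b : ℕ} [Nonempty (Alt a b)] (hn : 2 ≤ n)
    (α : Fin (n - 1) → Alt a b) (P : Profile n (Alt a b)) (x : Alt a b)
    (h1 : n ≤ Multiset.countP (fun y => y ≤ x) (Multiset.map (fun i => top (P i)) Finset.univ.val +
      Multiset.map α Finset.univ.val))
    (h2 : n ≤ Multiset.countP (fun y => x ≤ y) (Multiset.map (fun i => top (P i)) Finset.univ.val +
      Multiset.map α Finset.univ.val)) :
    medianScheme α P = x := by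
  unfold medianScheme
  apply medianOf_eq
  · rw [scheme_card α P hn]; have : (2 * n - 1) / 2 = n - 1 := by omega
    rw [this]; omega
  · rw [scheme_card α P hn]; omega

private lemma lt_medianScheme_of_counts {n : ℕ} {a b : ℕ} [Nonempty (Alt a b)] (hn : 2 ≤ n)
    (α : Fin (n - 1) → Alt a b) (P : Profile n (Alt a b)) (x : Alt a b)
    (h1 : Multiset.countP (fun y => y ≤ x) (Multiset.map (fun i => top (P i)) Finset.univ.val +
      Multiset.map α Finset.univ.val) ≤ n - 1) :
    x < medianScheme α P := by
  unfold medianScheme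
  apply lt_medianOf
  · rw [scheme_card α P hn]; omega
  · rw [scheme_card α P hn]; have : (2 * n - 1) / 2 = n - 1 := by omega
    rw [this]; exact h1

private lemma medianScheme_lt_of_counts {n : ℕ} {a b : ℕ} [Nonempty (Alt a b)] (hn : 2 ≤ n)
    (α : Fin (n - 1) → Alt a b) (P : Profile n (Alt a b)) (x : Alt a b)
    (h2 : Multiset.countP (fun y => x ≤ y) (Multiset.map (fun i => top (P i)) Finset.univ.val +
      Multiset.map α Finset.univ.val) ≤ n - 1) :
    medianScheme α P < x := by
  unfold medianScheme
  apply medianOf_lt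
  · rw [scheme_card α P hn]; omega
  · rw [scheme_card α P hn]
    have h3 : 2 * n - 1 - (2 * n - 1) / 2 - 1 = n - 1 := by omega
    rw [h3]; exact h2

private lemma top_update_same {n : ℕ} {Y : Type*} [Fintype Y] [Nonempty Y] [DecidableEq (Fin n)]
    (M L : LinearOrder Y) (i j : Fin n) (c : Y) (hM : top M = c) (hL : top L = c) :
    top (Function.update (fun _ : Fin n => M) i L j) = c := by
  by_cases hj : j = i
  · subst hj; rw [Function.update_self]; exact hL
  · rw [Function.update_of_ne hj]; exact hM

/-- `top L ∈ O(L)` for the median voter scheme: reporting `L` when everyone else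
tops at `top L` yields `top L`. -/
private lemma top_mem_optionSet {n : ℕ} {a b : ℕ} [Nonempty (Alt a b)] (hn : 2 ≤ n)
    (α : Fin (n - 1) → Alt a b) (i : Fin n) (L : LinearOrder (Alt a b)) :
    top L ∈ OptionSet (medianScheme α) i L := by
  set c := top L with hc
  refine ⟨Function.update (fun _ => topOrder c) i L, by rw [Function.update_self], ?_⟩
  apply medianScheme_eq_of_counts hn
  · rw [Multiset.countP_add]
    have htops : Multiset.countP (fun y => y ≤ c)
        (Multiset.map (fun j => top (Function.update (fun _ => topOrder c) i L j)) Finset.univ.val) = n :=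
      countP_map_univ_of_forall _ _ (fun j => by
        rw [top_update_same (topOrder c) L i j c (top_topOrder c) hc.symm])
    omega
  · rw [Multiset.countP_add]
    have htops : Multiset.countP (fun y => c ≤ y)
        (Multiset.map (fun j => top (Function.update (fun _ => topOrder c) i L j)) Finset.univ.val) = n :=
      countP_map_univ_of_forall _ _ (fun j => by
        rw [top_update_same (topOrder c) L i j c (top_topOrder c) hc.symm])
    omega

private lemma top_update_eval {n : ℕ} {Y : Type*} [LO : LinearOrder Y] [Fintype Y] [Nonempty Y]
    (i j : Fin n) (L : LinearOrder Y) (c : Y) :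
    top (Function.update (fun _ : Fin n => @topOrder Y LO c) i L j) = if j = i then top L else c := by
  by_cases hj : j = i
  · subst hj; rw [Function.update_self, if_pos rfl]
  · rw [Function.update_of_ne hj, if_neg hj]; exact @top_topOrder Y LO _ _ c

end MedianHelpers

/-- For a median voter scheme: an `x < α_1` is strongly vetoed by `i` iff `x = a`, and
an `x > α_{n-1}` is strongly vetoed by `i` iff `x = b`. -/
theorem medianScheme_strongVeto {n a b : ℕ} [Nonempty (Alt a b)]
    (hn : 2 ≤ n) (hab : a < b)
    (α : Fin (n - 1) → Alt a b) (hmono : Monotone α)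
    (i : Fin n) (x : Alt a b) :
    (x < α ⟨0, by omega⟩ →
      (x ∈ StrongVetoSet (medianScheme α) i ↔ x.val = a)) ∧
    (α ⟨n - 2, by omega⟩ < x →
      (x ∈ StrongVetoSet (medianScheme α) i ↔ x.val = b)) := by
  have hxa : a ≤ x.val := (Finset.mem_Icc.1 x.2).1
  have hxb : x.val ≤ b := (Finset.mem_Icc.1 x.2).2
  set aelt : Alt a b := ⟨a, Finset.mem_Icc.2 ⟨le_refl a, le_of_lt hab⟩⟩ with haelt
  set belt : Alt a b := ⟨b, Finset.mem_Icc.2 ⟨le_of_lt hab, le_refl b⟩⟩ with hbelt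
  have haelt_le : ∀ y : Alt a b, aelt ≤ y := fun y =>
    Subtype.coe_le_coe.1 (Finset.mem_Icc.1 y.2).1
  have hle_belt : ∀ y : Alt a b, y ≤ belt := fun y =>
    Subtype.coe_le_coe.1 (Finset.mem_Icc.1 y.2).2
  have hα0 : ∀ j, α ⟨0, by omega⟩ ≤ α j := fun j => hmono (by simp [Fin.le_def])
  have hαtop : ∀ j, α j ≤ α ⟨n - 2, by omega⟩ := fun j => hmono (by
    have := j.isLt; simp only [Fin.le_def]; omega)
  have hSV_iff : ∀ y : Alt a b, y ∈ StrongVetoSet (medianScheme α) i ↔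
      ∀ L : LinearOrder (Alt a b), y ∉ OptionSet (medianScheme α) i L ↔ top L ≠ y :=
    fun y => Iff.rfl
  constructor
  · -- x < α_1
    intro hxα
    constructor
    · -- x ∈ SV → x = a
      intro hSV
      by_contra hne
      have hax : aelt < x := lt_of_le_of_ne (haelt_le x) (by
        intro h; exact hne (congrArg Subtype.val h).symm)
      have hne' : top (topOrder aelt) ≠ x := by
        rw [top_topOrder]; exact ne_of_lt hax
      refine ((hSV_iff x).1 hSV (topOrder aelt)).2 hne' ?_
      refine ⟨Function.update (fun _ => topOrder x) i (topOrder aelt),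
        by rw [Function.update_self], ?_⟩
      apply medianScheme_eq_of_counts hn
      · rw [Multiset.countP_add]
        have htops : Multiset.countP (fun y => y ≤ x)
            (Multiset.map (fun j => top (Function.update (fun _ => topOrder x) i
              (topOrder aelt) j)) Finset.univ.val) = n :=
          countP_map_univ_of_forall _ _ (fun j => by
            rw [top_update_eval, top_topOrder]
            by_cases hj : j = i
            · rw [if_pos hj]; exact le_of_lt hax
            · rw [if_neg hj])
        omega
      · rw [Multiset.countP_add]
        have htops : n - 1 ≤ Multiset.countP (fun y => x ≤ y)
            (Multiset.map (fun j => top (Function.update (fun _ => topOrder x) i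
              (topOrder aelt) j)) Finset.univ.val) :=
          countP_map_univ_ge _ _ i (fun j hj => by
            rw [top_update_eval, top_topOrder, if_neg hj])
        have hα : Multiset.countP (fun y => x ≤ y) (Multiset.map α Finset.univ.val) = n - 1 :=
          countP_map_univ_of_forall _ _ (fun j => le_of_lt (lt_of_lt_of_le hxα (hα0 j)))
        omega
    · -- x = a → x ∈ SV
      intro hval
      have hxbot : ∀ y : Alt a b, y ≤ x → y = x := by
        intro y hy
        refine le_antisymm hy ?_
        have hax : aelt = x := Subtype.ext hval.symm
        rw [← hax]; exact haelt_le y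
      rw [hSV_iff]
      intro L
      constructor
      · intro hnot htop
        exact hnot (htop ▸ top_mem_optionSet hn α i L)
      · intro htopne
        rintro ⟨P, hPi, hPx⟩
        have hlt : x < medianScheme α P := by
          apply lt_medianScheme_of_counts hn
          rw [Multiset.countP_add]
          have htops : Multiset.countP (fun y => y ≤ x)
              (Multiset.map (fun j => top (P j)) Finset.univ.val) ≤ n - 1 :=
            countP_map_univ_le _ _ i (by
              rw [hPi]
              intro hle
              exact htopne (hxbot _ hle))
          have hα : Multiset.countP (fun y => y ≤ x) (Multiset.map α Finset.univ.val) = 0 :=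
            countP_map_univ_of_forall_not _ _ (fun j hle => by
              have h2 : (α j : ℕ) ≤ (x : ℕ) := hle
              have h3 : (x : ℕ) < (α ⟨0, by omega⟩ : ℕ) := hxα
              have h4 : (α ⟨0, by omega⟩ : ℕ) ≤ (α j : ℕ) := hα0 j
              omega)
          omega
        exact absurd hPx (ne_of_gt hlt)
  · -- α_{n-1} < x
    intro hxα
    constructor
    · -- x ∈ SV → x = b
      intro hSV
      by_contra hne
      have hax : x < belt := lt_of_le_of_ne (hle_belt x) (by
        intro h; exact hne (congrArg Subtype.val h))
      have hne' : top (topOrder belt) ≠ x := by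
        rw [top_topOrder]; exact ne_of_gt hax
      refine ((hSV_iff x).1 hSV (topOrder belt)).2 hne' ?_
      refine ⟨Function.update (fun _ => topOrder x) i (topOrder belt),
        by rw [Function.update_self], ?_⟩
      apply medianScheme_eq_of_counts hn
      · rw [Multiset.countP_add]
        have htops : n - 1 ≤ Multiset.countP (fun y => y ≤ x)
            (Multiset.map (fun j => top (Function.update (fun _ => topOrder x) i
              (topOrder belt) j)) Finset.univ.val) :=
          countP_map_univ_ge _ _ i (fun j hj => by
            rw [top_update_eval, top_topOrder, if_neg hj])
        have hα : Multiset.countP (fun y => y ≤ x) (Multiset.map α Finset.univ.val) = n - 1 :=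
          countP_map_univ_of_forall _ _ (fun j => le_of_lt (lt_of_le_of_lt (hαtop j) hxα))
        omega
      · rw [Multiset.countP_add]
        have htops : Multiset.countP (fun y => x ≤ y)
            (Multiset.map (fun j => top (Function.update (fun _ => topOrder x) i
              (topOrder belt) j)) Finset.univ.val) = n :=
          countP_map_univ_of_forall _ _ (fun j => by
            rw [top_update_eval, top_topOrder]
            by_cases hj : j = i
            · rw [if_pos hj]; exact le_of_lt hax
            · rw [if_neg hj])
        omega
    · -- x = b → x ∈ SV
      intro hval
      have hxtop : ∀ y : Alt a b, x ≤ y → y = x := by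
        intro y hy
        refine le_antisymm ?_ hy
        have hbx : belt = x := Subtype.ext hval.symm
        rw [← hbx]; exact hle_belt y
      rw [hSV_iff]
      intro L
      constructor
      · intro hnot htop
        exact hnot (htop ▸ top_mem_optionSet hn α i L)
      · intro htopne
        rintro ⟨P, hPi, hPx⟩
        have hlt : medianScheme α P < x := by
          apply medianScheme_lt_of_counts hn
          rw [Multiset.countP_add]
          have htops : Multiset.countP (fun y => x ≤ y)
              (Multiset.map (fun j => top (P j)) Finset.univ.val) ≤ n - 1 :=
            countP_map_univ_le _ _ i (by
              rw [hPi]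
              intro hle
              exact htopne (hxtop _ hle))
          have hα : Multiset.countP (fun y => x ≤ y) (Multiset.map α Finset.univ.val) = 0 :=
            countP_map_univ_of_forall_not _ _ (fun j hle => by
              have h2 : (x : ℕ) ≤ (α j : ℕ) := hle
              have h3 : (α ⟨n - 2, by omega⟩ : ℕ) < (x : ℕ) := hxα
              have h4 : (α j : ℕ) ≤ (α ⟨n - 2, by omega⟩ : ℕ) := hαtop j
              omega)
          omega
        exact absurd hPx (ne_of_lt hlt)
end

section
/- Let f^p be a generalized median voter scheme given by a monotonic family of fixed ballots p = {p_S}_{S ⊆ N}. For agent i with p_{N\{i}} ≤ p_{{i}}, the option set of P_i is: {t(P_i),...,p_{{i}}} if t(P_i) < p_{N\{i}}; {p_{N\{i}},...,p_{{i}}} if p_{N\{i}} ≤ t(P_i) ≤ p_{{i}}; and {p_{N\{i}},...,t(P_i)} if t(P_i) > p_{{i}}. -/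
/-- `p` is a monotonic family of fixed ballots: `p_N = a`, `p_∅ = b`, and
`S ⊆ T` implies `p_T ≤ p_S`. -/
def MonotonicFamily {n a b : ℕ} (p : Finset (Fin n) → Alt a b) : Prop :=
  (p Finset.univ).val = a ∧ (p ∅).val = b ∧
    ∀ S T : Finset (Fin n), S ⊆ T → p T ≤ p S

/-- The generalized median voter scheme associated with the family `p`:
`f^p(P) = min_{S ⊆ N} max_{j ∈ S} {t(P_j), p_S}`. -/
noncomputable def gms {n a b : ℕ} [Nonempty (Alt a b)]
    (p : Finset (Fin n) → Alt a b) (P : Profile n (Alt a b)) : Alt a b :=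
  Finset.univ.inf' ⟨∅, Finset.mem_univ _⟩ fun S : Finset (Fin n) =>
    (insert (p S) (S.image fun j => top (P j))).max' (Finset.insert_nonempty _ _)

/-! With `t` the top of `L`, `e = p (univ.erase i)` and `s = p {i}`, the option set is the
interval `[min t e, max t s]`; the three cases of the theorem just evaluate `min` and `max`
using `e ≤ s`. Every outcome is at least `min t e`, since a coalition containing `i` has ballot
at least `t` and one avoiding `i` has ballot at least `e` by monotonicity; the coalition `{i}`
caps it at `max t s`. Conversely, if every other agent reports top `x`, the coalition `univ`
(when `t ≤ x`) or `univ.erase i` (otherwise) brings the outcome down to `x`, while every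
coalition other than `∅` (ballot `b`) and `{i}` (ballot `max t s`) contains an agent with top `x`. -/

theorem top_eq_of_forall_le {X : Type*} [Fintype X] [Nonempty X] (L : LinearOrder X) {z : X}
    (h : ∀ w, L.le w z) : top L = z := by
  let := L
  exact le_antisymm (Finset.max'_le _ _ _ fun w _ => h w) (Finset.le_max' _ _ (Finset.mem_univ z))

theorem exists_linearOrder_top_eq {X : Type*} [Fintype X] [Nonempty X] (x : X) :
    ∃ L : LinearOrder X, top L = x := by
  classical
  let : LinearOrder X := LinearOrder.lift' _ (Fintype.equivFin X).injective
  let raise : X → WithTop X := fun z => if z = x then ⊤ else z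
  have raise_injective : raise.Injective := by
    intro z w h
    by_cases hz : z = x <;> by_cases hw : w = x <;> simp_all [raise]
  refine ⟨LinearOrder.lift' raise raise_injective, top_eq_of_forall_le _ fun w => ?_⟩
  show raise w ≤ raise x
  simp [raise]

section GMS

variable {n a b : ℕ}

theorem MonotonicFamily.antitone {p : Finset (Fin n) → Alt a b} (hp : MonotonicFamily p) :
    Antitone p :=
  hp.2.2

theorem MonotonicFamily.univ_le {p : Finset (Fin n) → Alt a b} (hp : MonotonicFamily p)
    (x : Alt a b) : p Finset.univ ≤ x :=
  show (p Finset.univ).val ≤ x.val by rw [hp.1]; exact (Finset.mem_Icc.1 x.2).1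

theorem MonotonicFamily.le_empty {p : Finset (Fin n) → Alt a b} (hp : MonotonicFamily p)
    (x : Alt a b) : x ≤ p ∅ :=
  show x.val ≤ (p ∅).val by rw [hp.2.1]; exact (Finset.mem_Icc.1 x.2).2

variable [Nonempty (Alt a b)] (p : Finset (Fin n) → Alt a b) (P : Profile n (Alt a b)) (x : Alt a b)

theorem gms_le_iff : gms p P ≤ x ↔ ∃ S, p S ≤ x ∧ ∀ j ∈ S, top (P j) ≤ x := by
  refine (Finset.inf'_le_iff _).trans ?_
  simp [Finset.max'_le_iff]

theorem le_gms_iff : x ≤ gms p P ↔ ∀ S, x ≤ p S ∨ ∃ j ∈ S, x ≤ top (P j) := by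
  refine (Finset.le_inf'_iff _ _).trans ?_
  simp [Finset.max'_eq_sup', Finset.le_sup'_iff]

variable {p P} {i : Fin n} {t : Alt a b}

theorem gms_mem_Icc (hp : Antitone p) (hPi : top (P i) = t) :
    gms p P ∈ Set.Icc (min t (p (Finset.univ.erase i))) (max t (p {i})) := by
  constructor
  · refine (le_gms_iff p P _).2 fun S => ?_
    by_cases hiS : i ∈ S
    · exact Or.inr ⟨i, hiS, hPi ▸ min_le_left _ _⟩
    · exact Or.inl <| (min_le_right _ _).trans <|
        hp (Finset.subset_erase.2 ⟨Finset.subset_univ S, hiS⟩)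
  · exact (gms_le_iff p P _).2 ⟨{i}, le_max_right _ _, by simp [hPi]⟩

-- `L` comes after the colon: once a `LinearOrder (Alt a b)` is in the local context, instance
-- search prefers it to the order inherited from `ℕ` in the `min`/`max` lemmas.
theorem exists_profile_gms_eq (hp : MonotonicFamily p)
    (hx : x ∈ Set.Icc (min t (p (Finset.univ.erase i))) (max t (p {i}))) :
    ∀ L : LinearOrder (Alt a b), top L = t → ∃ P : Profile n (Alt a b), P i = L ∧ gms p P = x := by
  classical
  have hlo := min_le_iff.1 hx.1
  have hhi := le_max_iff.1 hx.2
  intro L hL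
  obtain ⟨M, hM⟩ := exists_linearOrder_top_eq x
  let Q : Profile n (Alt a b) := Function.update (fun _ => M) i L
  have hQi : top (Q i) = t := by simp [Q, hL]
  have hQj : ∀ j ≠ i, top (Q j) = x := fun j hj => by simp [Q, hj, hM]
  refine ⟨Q, Function.update_self .., le_antisymm ((gms_le_iff p Q x).2 ?_)
    ((le_gms_iff p Q x).2 fun S => ?_)⟩
  · by_cases htx : t ≤ x
    · refine ⟨Finset.univ, hp.univ_le x, fun j _ => ?_⟩
      by_cases hji : j = i
      · rwa [hji, hQi]
      · exact (hQj j hji).le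
    · exact ⟨Finset.univ.erase i, hlo.resolve_left htx,
        fun j hj => (hQj j (Finset.ne_of_mem_erase hj)).le⟩
  · by_cases hS : ∃ j ∈ S, j ≠ i
    · obtain ⟨j, hjS, hji⟩ := hS
      exact Or.inr ⟨j, hjS, (hQj j hji).ge⟩
    push Not at hS
    rcases Finset.subset_singleton_iff.1 (Finset.subset_singleton_iff'.2 hS) with rfl | rfl
    · exact Or.inl (hp.le_empty x)
    · rcases hhi with hxt | hxs
      · exact Or.inr ⟨i, Finset.mem_singleton_self i, hQi ▸ hxt⟩
      · exact Or.inl hxs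

theorem optionSet_gms (hp : MonotonicFamily p) (i : Fin n) (L : LinearOrder (Alt a b)) :
    OptionSet (gms p) i L =
      Set.Icc (min (top L) (p (Finset.univ.erase i))) (max (top L) (p {i})) := by
  ext x
  constructor
  · rintro ⟨P, hPi, rfl⟩
    exact gms_mem_Icc hp.antitone (congrArg top hPi)
  · exact fun hx => exists_profile_gms_eq x hp hx L rfl

end GMS

theorem Set.Icc_min_max_eq_ite {α : Type*} [LinearOrder α] {t e s : α} (hes : e ≤ s) :
    Set.Icc (min t e) (max t s) =
      if t < e then Set.Icc t s else if t ≤ s then Set.Icc e s else Set.Icc e t := by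
  split_ifs with hte hts
  · rw [min_eq_left hte.le, max_eq_right (hte.le.trans hes)]
  · rw [min_eq_right (not_lt.1 hte), max_eq_right hts]
  · rw [min_eq_right (not_lt.1 hte), max_eq_left (not_le.1 hts).le]

theorem gms_optionSet_general {n a b : ℕ} [Nonempty (Alt a b)]
    (p : Finset (Fin n) → Alt a b) (hp : MonotonicFamily p) (i : Fin n)
    (hle : p (Finset.univ.erase i) ≤ p {i}) (L : LinearOrder (Alt a b)) :
    OptionSet (gms p) i L =
      if top L < p (Finset.univ.erase i) then
        Set.Icc (top L) (p {i})
      else if top L ≤ p {i} then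
        Set.Icc (p (Finset.univ.erase i)) (p {i})
      else Set.Icc (p (Finset.univ.erase i)) (top L) := by
  rw [optionSet_gms hp i L]
  generalize top L = t
  -- see `exists_profile_gms_eq`
  clear L
  exact Set.Icc_min_max_eq_ite hle

/-- Option sets of a generalized median voter scheme for an agent `i` with
`p_{N\{i}} ≤ p_{{i}}`. -/
theorem gms_optionSet {n a b : ℕ} [Nonempty (Alt a b)]
    (hn : 2 ≤ n) (hab : a ≤ b)
    (p : Finset (Fin n) → Alt a b) (hp : MonotonicFamily p) (i : Fin n)
    (hle : p (Finset.univ.erase i) ≤ p {i}) (L : LinearOrder (Alt a b)) :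
    OptionSet (gms p) i L =
      if top L < p (Finset.univ.erase i) then
        Set.Icc (top L) (p {i})
      else if top L ≤ p {i} then
        Set.Icc (p (Finset.univ.erase i)) (p {i})
      else Set.Icc (p (Finset.univ.erase i)) (top L) :=
  gms_optionSet_general p hp i hle L
end
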